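/- Let M₊² = u₊²/(Rγθ₊) with u₊, θ₊ > 0 and R, μ, κ > 0, γ > 1, and let J be the matrix with entries J₁₁ = (u₊² - Rθ₊)/(μ u₊), J₁₂ = R/μ, J₂₁ = Rθ₊/κ, J₂₂ = R u₊/(κ(γ-1)). If M₊ > 1, then both eigenvalues of J are real and positive. -/

import Mathlib

/-!
The characteristic polynomial `X² - (tr J) X + det J` has real roots because its discriminant
`(J₁₁ - J₂₂)² + 4 J₁₂ J₂₁` is nonnegative, the off-diagonal entries being positive; both roots
are positive since their sum `tr J` and product `det J` are. Here
`det J = R (u₊² - Rγθ₊) / (κμ(γ-1))`, positive exactly when `M₊ > 1`, and then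
`u₊² > Rγθ₊ > Rθ₊` makes `J₁₁`, hence `tr J`, positive.
-/

open Polynomial

theorem Polynomial.X_sq_sub_C_mul_X_add_C_eq_mul {K : Type*} [Field K] [NeZero (2 : K)]
    {t p s : K} (hs : s ^ 2 = t ^ 2 - 4 * p) :
    (X ^ 2 - C t * X + C p : K[X]) = (X - C ((t + s) / 2)) * (X - C ((t - s) / 2)) := by
  have hsum : C t = C ((t + s) / 2) + C ((t - s) / 2) := by
    rw [← C_add]; congr 1; field_simp; ring
  have hprod : C p = C ((t + s) / 2) * C ((t - s) / 2) := by
    rw [← C_mul]; congr 1; field_simp; linear_combination hs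
  rw [hsum, hprod]
  ring

theorem Polynomial.exists_pos_roots_X_sq_sub_C_mul_X_add_C {t p : ℝ} (ht : 0 < t) (hp : 0 < p)
    (h : 4 * p ≤ t ^ 2) :
    ∃ l₁ l₂ : ℝ, 0 < l₁ ∧ 0 < l₂ ∧ (X ^ 2 - C t * X + C p : ℝ[X]) = (X - C l₁) * (X - C l₂) := by
  have hs : √(t ^ 2 - 4 * p) ^ 2 = t ^ 2 - 4 * p := Real.sq_sqrt (by linarith)
  have hs_lt : √(t ^ 2 - 4 * p) < t := by nlinarith [Real.sqrt_nonneg (t ^ 2 - 4 * p)]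
  exact ⟨_, _, by positivity, by linarith, X_sq_sub_C_mul_X_add_C_eq_mul hs⟩

theorem Matrix.exists_pos_roots_charpoly_fin_two {M : Matrix (Fin 2) (Fin 2) ℝ}
    (htr : 0 < M.trace) (hdet : 0 < M.det) (hoff : 0 ≤ M 0 1 * M 1 0) :
    ∃ l₁ l₂ : ℝ, 0 < l₁ ∧ 0 < l₂ ∧ M.charpoly = (X - C l₁) * (X - C l₂) := by
  have hdisc : 4 * M.det ≤ M.trace ^ 2 := by
    rw [trace_fin_two, det_fin_two]
    nlinarith [sq_nonneg (M 0 0 - M 1 1)]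
  rw [charpoly_fin_two]
  exact exists_pos_roots_X_sq_sub_C_mul_X_add_C htr hdet hdisc

theorem stmt_3 (R γ μ κ θp up Mp : ℝ)
    (hR : 0 < R) (hγ : 1 < γ) (hμ : 0 < μ) (hκ : 0 < κ) (hθ : 0 < θp) (hu : 0 < up)
    (hM : Mp ^ 2 = up ^ 2 / (R * γ * θp)) (hM1 : 1 < Mp) :
    ∃ l₁ l₂ : ℝ, 0 < l₁ ∧ 0 < l₂ ∧
      Matrix.charpoly !![(up ^ 2 - R * θp) / (μ * up), R / μ;
                         R * θp / κ, R * up / (κ * (γ - 1))]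
        = (Polynomial.X - Polynomial.C l₁) * (Polynomial.X - Polynomial.C l₂) := by
  have hγ1 : 0 < γ - 1 := by linarith
  have hsupersonic : R * γ * θp < up ^ 2 := by
    have hMsq : 1 < up ^ 2 / (R * γ * θp) := by nlinarith
    rwa [one_lt_div (by positivity)] at hMsq
  have hJ₁₁ : 0 < up ^ 2 - R * θp := by nlinarith
  apply Matrix.exists_pos_roots_charpoly_fin_two
  · rw [Matrix.trace_fin_two_of]
    positivity
  · have hdet : (up ^ 2 - R * θp) / (μ * up) * (R * up / (κ * (γ - 1))) - R / μ * (R * θp / κ)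
        = R * (up ^ 2 - R * γ * θp) / (κ * μ * (γ - 1)) := by
      field_simp
      ring
    rw [Matrix.det_fin_two_of, hdet]
    have : 0 < up ^ 2 - R * γ * θp := by linarith
    positivity
  · simp only [Matrix.of_apply, Matrix.cons_val', Matrix.cons_val_zero, Matrix.cons_val_one,
      Matrix.empty_val', Matrix.cons_val_fin_one]
    positivity
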